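/- On ℂ^{m+n} with s(z) = (∏_{i=1}^m z_i)/(∏_{i=m+1}^{m+n} z_i) and f = Re(s), with V the gradient direction field of f scaled as V = Re( (∑_{i=1}^m (z_i/|z_i|²)∂/∂z_i − ∑_{i=m+1}^{m+n} (z_i/|z_i|²)∂/∂z_i )/( s · ∑_{i=1}^{m+n} 1/|z_i|² ) ), the functions ρ_{ij} = |z_i|² − |z_j|² for 1 ≤ i,j ≤ m or m+1 ≤ i,j ≤ m+n, and ρ_{ij} = |z_i|² + |z_j|² for 1 ≤ i ≤ m, m+1 ≤ j ≤ m+n, are all invariant under the flow of V. -/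

import Mathlib

/-- The meromorphic function `s(z) = (∏_{i<m} z_i)/(∏_{m ≤ i} z_i)` on `ℂ^{m+n}`. -/
noncomputable def sFun (m n : ℕ) (z : Fin (m + n) → ℂ) : ℂ :=
  (∏ i : Fin (m + n), if (i : ℕ) < m then z i else 1) / (∏ i : Fin (m + n), if (i : ℕ) < m then 1 else z i)

/-- The rescaled gradient direction field
`V = Re((∑_{i<m} (z_i/|z_i|²)∂_i − ∑_{m≤i} (z_i/|z_i|²)∂_i)/(s ∑ᵢ 1/|z_i|²))`,
given by its complex components. -/
noncomputable def Vfield (m n : ℕ) (z : Fin (m + n) → ℂ) : Fin (m + n) → ℂ := fun i =>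
  ((if (i : ℕ) < m then 1 else -1) * (z i / (Complex.normSq (z i) : ℂ))) /
    (sFun m n z * ∑ j, ((Complex.normSq (z j) : ℂ))⁻¹)

/-! Along `V` every `|z_i|²` has derivative `2 Re(V_i conj z_i) = ±2 Re(1/(s ∑ⱼ 1/|z_j|²))`,
with sign `+` on the first group of coordinates and `-` on the second: all the `|z_i|²` move at
the same speed, those of the first group in one direction and those of the second in the other. -/

open ComplexConjugate

section NormSqApply

variable {ι : Type*} [Fintype ι]

lemma hasFDerivAt_normSq_apply (z : ι → ℂ) (i : ι) :
    HasFDerivAt (fun w : ι → ℂ => Complex.normSq (w i))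
      (2 • innerSL ℝ (z i) ∘L ContinuousLinearMap.proj i) z := by
  simpa only [Complex.normSq_eq_norm_sq] using (hasFDerivAt_apply i z).norm_sq

lemma differentiableAt_normSq_apply (z : ι → ℂ) (i : ι) :
    DifferentiableAt ℝ (fun w : ι → ℂ => Complex.normSq (w i)) z :=
  (hasFDerivAt_normSq_apply z i).differentiableAt

lemma fderiv_normSq_apply_apply (z v : ι → ℂ) (i : ι) :
    fderiv ℝ (fun w : ι → ℂ => Complex.normSq (w i)) z v = 2 * (v i * conj (z i)).re := by
  rw [(hasFDerivAt_normSq_apply z i).fderiv]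
  simp only [smul_apply, ContinuousLinearMap.comp_apply, ContinuousLinearMap.proj_apply,
    coe_innerSL_apply, Complex.inner, nsmul_eq_mul, Nat.cast_ofNat]

end NormSqApply

section Vfield

variable {m n : ℕ}

lemma Vfield_mul_conj {z : Fin (m + n) → ℂ} {i : Fin (m + n)} (hz : z i ≠ 0) :
    Vfield m n z i * conj (z i) =
      (if (i : ℕ) < m then 1 else -1) * (sFun m n z * ∑ j, ((Complex.normSq (z j) : ℂ))⁻¹)⁻¹ := by
  have hnormSq : (Complex.normSq (z i) : ℂ) ≠ 0 := by
    exact_mod_cast (Complex.normSq_pos.2 hz).ne'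
  rw [Vfield, div_mul_eq_mul_div, mul_assoc, div_mul_eq_mul_div, Complex.mul_conj,
    div_self hnormSq]
  ring

lemma fderiv_normSq_apply_Vfield {z : Fin (m + n) → ℂ} (hz : ∀ i, z i ≠ 0) (i : Fin (m + n)) :
    fderiv ℝ (fun w : Fin (m + n) → ℂ => Complex.normSq (w i)) z (Vfield m n z) =
      2 * (if (i : ℕ) < m then 1 else -1) *
        ((sFun m n z * ∑ j, ((Complex.normSq (z j) : ℂ))⁻¹)⁻¹).re := by
  rw [fderiv_normSq_apply_apply, Vfield_mul_conj (hz i)]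
  split_ifs <;> simp

end Vfield

theorem stmt_5_general (m n : ℕ) (z : Fin (m + n) → ℂ) (hz : ∀ i, z i ≠ 0) :
    (∀ i j : Fin (m + n),
      (((i : ℕ) < m ∧ (j : ℕ) < m) ∨ (m ≤ (i : ℕ) ∧ m ≤ (j : ℕ))) →
      fderiv ℝ (fun w : Fin (m + n) → ℂ => Complex.normSq (w i) - Complex.normSq (w j)) z
        (Vfield m n z) = 0) ∧
    (∀ i j : Fin (m + n), (i : ℕ) < m → m ≤ (j : ℕ) →
      fderiv ℝ (fun w : Fin (m + n) → ℂ => Complex.normSq (w i) + Complex.normSq (w j)) z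
        (Vfield m n z) = 0) := by
  refine ⟨fun i j hij => ?_, fun i j hi hj => ?_⟩
  · rw [fderiv_fun_sub (differentiableAt_normSq_apply z i) (differentiableAt_normSq_apply z j),
      sub_apply, fderiv_normSq_apply_Vfield hz, fderiv_normSq_apply_Vfield hz]
    rcases hij with ⟨hi, hj⟩ | ⟨hi, hj⟩
    · simp [hi, hj]
    · simp [hi.not_gt, hj.not_gt]
  · rw [fderiv_fun_add (differentiableAt_normSq_apply z i) (differentiableAt_normSq_apply z j),
      add_apply, fderiv_normSq_apply_Vfield hz, fderiv_normSq_apply_Vfield hz]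
    simp only [hi, hj.not_gt, if_true, if_false]
    ring

/-- the functions `ρ_{ij} = |z_i|² − |z_j|²` (for `i, j` both in the first
group or both in the second) and `ρ_{ij} = |z_i|² + |z_j|²` (for `i` in the first,
`j` in the second group) are invariant under the flow of `V`. -/
theorem stmt_5 (m n : ℕ) (z : Fin (m + n) → ℂ) (hz : ∀ i, z i ≠ 0)
    (hs : sFun m n z ≠ 0) :
    (∀ i j : Fin (m + n),
      (((i : ℕ) < m ∧ (j : ℕ) < m) ∨ (m ≤ (i : ℕ) ∧ m ≤ (j : ℕ))) →
      fderiv ℝ (fun w : Fin (m + n) → ℂ => Complex.normSq (w i) - Complex.normSq (w j)) z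
        (Vfield m n z) = 0) ∧
    (∀ i j : Fin (m + n), (i : ℕ) < m → m ≤ (j : ℕ) →
      fderiv ℝ (fun w : Fin (m + n) → ℂ => Complex.normSq (w i) + Complex.normSq (w j)) z
        (Vfield m n z) = 0) :=
  stmt_5_general m n z hz
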